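/- Let Λ be a ring, J a two-sided ideal, and 0 → M →^{φ} M → Q → 0 an exact sequence of finitely generated Λ-modules with φ(J^s M) ⊆ J^{s+1} M for all s ≥ 0. Then for every k ≥ 1 and every two-sided ideal I ⊇ J^{k+1}, one has dim_𝔽 M/IM ≤ k · dim_𝔽 Q/IQ + dim_𝔽 M/(J+I)M, whenever these quotients are finite-dimensional over a central subfield 𝔽. In particular dim_𝔽 M/IM ≤ k · dim_𝔽 Q/IQ + dim_𝔽 M/JM. -/

import Mathlib

/-- The submodule `J·N` of `M`, for a (left) ideal `J` of a possibly noncommutative ring. -/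
def idealSmulSub (Λ : Type*) [Ring Λ] (M : Type*) [AddCommGroup M] [Module Λ M]
    (J : Ideal Λ) (N : Submodule Λ M) : Submodule Λ M :=
  Submodule.span Λ {x | ∃ j ∈ J, ∃ m ∈ N, x = j • m}

/-- The submodule `J^s·M`. -/
def iterSmul (Λ : Type*) [Ring Λ] (M : Type*) [AddCommGroup M] [Module Λ M]
    (J : Ideal Λ) : ℕ → Submodule Λ M
  | 0 => ⊤
  | s + 1 => idealSmulSub Λ M J (iterSmul Λ M J s)

/-!
Reducing modulo `I`, `φ` induces an endomorphism `φ̄` of the finite-dimensional space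
`V = M/IM`, and right exactness of `N ↦ N/IN` makes `coker φ̄` a subquotient of `Q/IQ`.
Each application of `φ̄` lowers the rank by at most `dim ker φ̄ = dim coker φ̄`, so
`dim V ≤ k · dim coker φ̄ + rank φ̄ᵏ`. Finally `φᵏ(JM) ⊆ J^{k+1}M ⊆ IM`, so `φ̄ᵏ` factors
through `M/(J+I)M`.
-/

open Module Submodule

namespace LinearMap

variable {K V W : Type*} [Field K] [AddCommGroup V] [Module K V] [AddCommGroup W] [Module K W]

theorem finrank_range_pow_le_finrank_quotient_range_add [FiniteDimensional K V]
    (f : V →ₗ[K] V) (i : ℕ) :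
    finrank K (range (f ^ i)) ≤ finrank K (V ⧸ range f) + finrank K (range (f ^ (i + 1))) := by
  set R := range (f ^ i)
  have h_image : range (f.domRestrict R) = range (f ^ (i + 1)) := by
    rw [range_domRestrict, pow_succ', Module.End.mul_eq_comp, range_comp]
  have h_ker : finrank K (ker (f.domRestrict R)) ≤ finrank K (ker f) := by
    rw [ker_domRestrict, ← Submodule.finrank_map_subtype_eq]
    exact Submodule.finrank_mono (Submodule.map_comap_le _ _)
  have h_rank_R := finrank_range_add_finrank_ker (f.domRestrict R)
  have h_rank_f := finrank_range_add_finrank_ker f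
  have h_quot := Submodule.finrank_quotient_add_finrank (range f)
  rw [h_image] at h_rank_R
  omega

theorem finrank_le_mul_finrank_quotient_range_add_finrank_range_pow [FiniteDimensional K V]
    (f : V →ₗ[K] V) (k : ℕ) :
    finrank K V ≤ k * finrank K (V ⧸ range f) + finrank K (range (f ^ k)) := by
  induction k with
  | zero => rw [zero_mul, zero_add, pow_zero, Module.End.one_eq_id, range_id, finrank_top]
  | succ k ih =>
    have h_step := f.finrank_range_pow_le_finrank_quotient_range_add k
    rw [Nat.succ_mul]
    omega

theorem finrank_quotient_range_le_of_ker_le_range {U : Type*} [AddCommGroup U] [Module K U]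
    [FiniteDimensional K W] (f : U →ₗ[K] V) (g : V →ₗ[K] W) (h : ker g ≤ range f) :
    finrank K (V ⧸ range f) ≤ finrank K W :=
  have : FiniteDimensional K (V ⧸ ker g) := .equiv g.quotKerEquivRange.symm
  calc finrank K (V ⧸ range f) ≤ finrank K (V ⧸ ker g) :=
        finrank_le_finrank_of_surjective (Submodule.factor_surjective h)
    _ = finrank K (range g) := g.quotKerEquivRange.finrank_eq
    _ ≤ finrank K W := Submodule.finrank_le _

end LinearMap

theorem LinearMap.restrictScalars_pow {K Λ V : Type*} [Semiring K] [Semiring Λ] [AddCommMonoid V]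
    [Module K V] [Module Λ V] [LinearMap.CompatibleSMul V V K Λ] (f : Module.End Λ V) (k : ℕ) :
    (f.restrictScalars K) ^ k = (f ^ k).restrictScalars K :=
  LinearMap.ext fun v ↦ by
    rw [Module.End.pow_apply, LinearMap.restrictScalars_apply, Module.End.pow_apply]; rfl

theorem Module.End.pow_apply_mem_of_forall_apply_mem {Λ M : Type*} [Semiring Λ]
    [AddCommMonoid M] [Module Λ M] {F : ℕ → Submodule Λ M} {φ : Module.End Λ M}
    (hφ : ∀ s, ∀ x ∈ F s, φ x ∈ F (s + 1)) (i : ℕ) {s : ℕ} {x : M} (hx : x ∈ F s) :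
    (φ ^ i) x ∈ F (s + i) := by
  induction i generalizing s x with
  | zero => exact hx
  | succ i ih =>
    rw [pow_succ, Module.End.mul_apply, add_comm i 1, ← add_assoc]
    exact ih (hφ s x hx)

section IdealSmul

variable {Λ : Type*} [Ring Λ] {M : Type*} [AddCommGroup M] [Module Λ M]

theorem idealSmulSub_eq_smul (I : Ideal Λ) (N : Submodule Λ M) : idealSmulSub Λ M I N = I • N :=
  le_antisymm (span_le.mpr fun _ ⟨_, hj, _, hm, hx⟩ ↦ hx ▸ smul_mem_smul hj hm)
    (smul_le.mpr fun j hj m hm ↦ subset_span ⟨j, hj, m, hm, rfl⟩)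

theorem iterSmul_eq_smul_top (J : Ideal Λ) : ∀ s, iterSmul Λ M J s = iterSmul Λ Λ J s • ⊤
  | 0 => (top_smul _).symm
  | s + 1 => by
    rw [iterSmul, iterSmul, idealSmulSub_eq_smul, idealSmulSub_eq_smul, iterSmul_eq_smul_top J s,
      Submodule.smul_assoc]

theorem Submodule.ker_mapQ_smul_top_le_range_mapQ {P Q : Type*} [AddCommGroup P] [Module Λ P]
    [AddCommGroup Q] [Module Λ Q] (I : Ideal Λ) (φ : P →ₗ[Λ] M) (ψ : M →ₗ[Λ] Q)
    (hψ : Function.Surjective ψ) (hexact : LinearMap.ker ψ ≤ LinearMap.range φ) :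
    LinearMap.ker (mapQ (I • ⊤) (I • ⊤) ψ (smul_top_le_comap_smul_top I ψ)) ≤
      LinearMap.range (mapQ (I • ⊤) (I • ⊤) φ (smul_top_le_comap_smul_top I φ)) := by
  rw [ker_mapQ, comap_smul_top_of_surjective I ψ hψ, map_sup, mkQ_map_self, bot_sup_eq,
    range_mapQ]
  exact map_mono hexact

end IdealSmul

theorem finrank_quotient_le_of_contracting_endomorphism_general
    (𝔽 : Type*) [Field 𝔽] (Λ : Type*) [Ring Λ] [Algebra 𝔽 Λ]
    (M Q : Type*) [AddCommGroup M] [Module Λ M] [Module 𝔽 M] [IsScalarTower 𝔽 Λ M]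
    [AddCommGroup Q] [Module Λ Q] [Module 𝔽 Q] [IsScalarTower 𝔽 Λ Q]
    (J I : Ideal Λ)
    (φ : M →ₗ[Λ] M) (ψ : M →ₗ[Λ] Q)
    (hψ : Function.Surjective ψ)
    (hexact : LinearMap.ker ψ = LinearMap.range φ)
    (hφJ : ∀ s : ℕ, ∀ x ∈ iterSmul Λ M J s, φ x ∈ iterSmul Λ M J (s + 1))
    (k : ℕ)
    (hkI : iterSmul Λ Λ J (k + 1) ≤ I)
    [FiniteDimensional 𝔽 (M ⧸ idealSmulSub Λ M I ⊤)]
    [FiniteDimensional 𝔽 (Q ⧸ idealSmulSub Λ Q I ⊤)]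
    [FiniteDimensional 𝔽 (M ⧸ (idealSmulSub Λ M J ⊤ ⊔ idealSmulSub Λ M I ⊤))] :
    Module.finrank 𝔽 (M ⧸ idealSmulSub Λ M I ⊤) ≤
      k * Module.finrank 𝔽 (Q ⧸ idealSmulSub Λ Q I ⊤) +
        Module.finrank 𝔽 (M ⧸ (idealSmulSub Λ M J ⊤ ⊔ idealSmulSub Λ M I ⊤)) := by
  rw [idealSmulSub_eq_smul, idealSmulSub_eq_smul, idealSmulSub_eq_smul] at *
  let φI := mapQ (I • ⊤) (I • ⊤) φ (smul_top_le_comap_smul_top I φ)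
  let ψI := mapQ (I • ⊤) (I • ⊤) ψ (smul_top_le_comap_smul_top I ψ)
  have h_coker : finrank 𝔽 ((M ⧸ I • ⊤) ⧸ LinearMap.range (φI.restrictScalars 𝔽)) ≤
      finrank 𝔽 (Q ⧸ I • (⊤ : Submodule Λ Q)) :=
    LinearMap.finrank_quotient_range_le_of_ker_le_range _ (ψI.restrictScalars 𝔽)
      (ker_mapQ_smul_top_le_range_mapQ I φ ψ hψ hexact.le)
  have h_kill : J • ⊤ ⊔ I • ⊤ ≤ comap (φ ^ k) (I • ⊤) := by
    refine sup_le (fun x hx ↦ ?_) (smul_top_le_comap_smul_top I _)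
    have hx₁ : x ∈ iterSmul Λ M J 1 := by rwa [iterSmul, iterSmul, idealSmulSub_eq_smul]
    have hφx := Module.End.pow_apply_mem_of_forall_apply_mem hφJ k hx₁
    rw [add_comm, iterSmul_eq_smul_top] at hφx
    exact smul_mono_left hkI hφx
  have h_image : finrank 𝔽 (LinearMap.range (φI.restrictScalars 𝔽 ^ k)) ≤
      finrank 𝔽 (M ⧸ (J • ⊤ ⊔ I • (⊤ : Submodule Λ M))) := by
    let φk := mapQ (J • ⊤ ⊔ I • ⊤) (I • ⊤) (φ ^ k) h_kill
    refine (Submodule.finrank_mono ?_).trans (φk.restrictScalars 𝔽).finrank_range_le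
    rw [LinearMap.restrictScalars_pow, ← mapQ_pow]
    rintro _ ⟨v, rfl⟩
    obtain ⟨m, rfl⟩ := mkQ_surjective _ v
    exact ⟨mkQ _ m, rfl⟩
  calc finrank 𝔽 (M ⧸ I • (⊤ : Submodule Λ M))
      ≤ k * finrank 𝔽 ((M ⧸ I • ⊤) ⧸ LinearMap.range (φI.restrictScalars 𝔽)) +
          finrank 𝔽 (LinearMap.range (φI.restrictScalars 𝔽 ^ k)) :=
        (φI.restrictScalars 𝔽).finrank_le_mul_finrank_quotient_range_add_finrank_range_pow k
    _ ≤ _ := by gcongr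

/-- Let `Λ` be an `𝔽`-algebra, `J`, `I` two-sided ideals, and `0 → M →^φ M → Q → 0` an
exact sequence of `Λ`-modules with `φ(J^s M) ⊆ J^{s+1} M` for all `s`.  If `I ⊇ J^{k+1}`
then `dim_𝔽 M/IM ≤ k · dim_𝔽 Q/IQ + dim_𝔽 M/(J+I)M`. -/
theorem finrank_quotient_le_of_contracting_endomorphism
    (𝔽 : Type*) [Field 𝔽] (Λ : Type*) [Ring Λ] [Algebra 𝔽 Λ]
    (M Q : Type*) [AddCommGroup M] [Module Λ M] [Module 𝔽 M] [IsScalarTower 𝔽 Λ M]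
    [AddCommGroup Q] [Module Λ Q] [Module 𝔽 Q] [IsScalarTower 𝔽 Λ Q]
    [Module.Finite Λ M]
    (J I : Ideal Λ)
    (hJ2 : ∀ a ∈ J, ∀ r : Λ, a * r ∈ J) (hI2 : ∀ a ∈ I, ∀ r : Λ, a * r ∈ I)
    (φ : M →ₗ[Λ] M) (ψ : M →ₗ[Λ] Q)
    (hinj : Function.Injective φ) (hψ : Function.Surjective ψ)
    (hexact : LinearMap.ker ψ = LinearMap.range φ)
    (hφJ : ∀ s : ℕ, ∀ x ∈ iterSmul Λ M J s, φ x ∈ iterSmul Λ M J (s + 1))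
    (k : ℕ) (hk : 1 ≤ k)
    (hkI : iterSmul Λ Λ J (k + 1) ≤ I)
    [FiniteDimensional 𝔽 (M ⧸ idealSmulSub Λ M I ⊤)]
    [FiniteDimensional 𝔽 (Q ⧸ idealSmulSub Λ Q I ⊤)]
    [FiniteDimensional 𝔽 (M ⧸ (idealSmulSub Λ M J ⊤ ⊔ idealSmulSub Λ M I ⊤))] :
    Module.finrank 𝔽 (M ⧸ idealSmulSub Λ M I ⊤) ≤
      k * Module.finrank 𝔽 (Q ⧸ idealSmulSub Λ Q I ⊤) +
        Module.finrank 𝔽 (M ⧸ (idealSmulSub Λ M J ⊤ ⊔ idealSmulSub Λ M I ⊤)) :=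
  finrank_quotient_le_of_contracting_endomorphism_general 𝔽 Λ M Q J I φ ψ hψ hexact hφJ k hkI
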